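/- In the Artin braid group B_n, for every 1 ≤ i ≤ n−2, the product of the three cusp braids arising from regenerating a tangency on the conic side satisfies (σ_{i+1}^{−1} σ_i³ σ_{i+1}) · σ_i³ · (σ_{i+1} σ_i³ σ_{i+1}^{−1}) = σ_i σ_{i+1}³ σ_i σ_{i+1}³ σ_i. -/

import Mathlib

/-- The braid relations among `m` Artin generators `σ_1, …, σ_m`, where the
generator `σ_{k+1}` is represented by the index `k : Fin m`:
`σ_i σ_{i+1} σ_i = σ_{i+1} σ_i σ_{i+1}` and `σ_i σ_j = σ_j σ_i` for `|i - j| ≥ 2`. -/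
def braidRels (m : ℕ) : Set (FreeGroup (Fin m)) :=
  { r | (∃ i j : Fin m, (i : ℕ) + 1 = (j : ℕ) ∧
          r = FreeGroup.of i * FreeGroup.of j * FreeGroup.of i *
              (FreeGroup.of j * FreeGroup.of i * FreeGroup.of j)⁻¹) ∨
        (∃ i j : Fin m, (i : ℕ) + 2 ≤ (j : ℕ) ∧
          r = FreeGroup.of i * FreeGroup.of j * (FreeGroup.of i)⁻¹ * (FreeGroup.of j)⁻¹) }

/-- The Artin braid group `B_n` on `n` strands, presented by the generators
`σ_1, …, σ_{n-1}` subject to the braid relations. -/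
def BraidGroup (n : ℕ) : Type := PresentedGroup (braidRels (n - 1))

instance (n : ℕ) : Group (BraidGroup n) :=
  inferInstanceAs (Group (PresentedGroup (braidRels (n - 1))))

/-- The Artin generator `σ_k` of the braid group `B_n`, defined for `1 ≤ k ≤ n - 1`
(with junk value `1` for indices out of range). -/
def σ (n : ℕ) (k : ℕ) : BraidGroup n :=
  if h : 1 ≤ k ∧ k ≤ n - 1 then
    (PresentedGroup.of (⟨k - 1, by omega⟩ : Fin (n - 1)) : PresentedGroup (braidRels (n - 1)))
  else 1

/-! The braid relation `a b a = b a b` says that `b⁻¹ a b = a b a⁻¹`; conjugating powers then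
turns each outer cusp braid `b^{∓1} a³ b^{±1}` into `a^{±1} b³ a^{∓1}`, and the three factors
telescope to `a b³ a b³ a`. -/

section Braid

variable {G : Type*} [Group G] {a b : G}

theorem inv_mul_mul_eq_mul_mul_inv_of_braid (h : a * b * a = b * a * b) :
    b⁻¹ * a * b = a * b * a⁻¹ :=
  calc b⁻¹ * a * b = b⁻¹ * (a * b * a) * a⁻¹ := by group
    _ = b⁻¹ * (b * a * b) * a⁻¹ := by rw [h]
    _ = a * b * a⁻¹ := by group

theorem inv_mul_pow_mul_eq_mul_pow_mul_inv_of_braid (h : a * b * a = b * a * b) (k : ℕ) :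
    b⁻¹ * a ^ k * b = a * b ^ k * a⁻¹ :=
  calc b⁻¹ * a ^ k * b = (b⁻¹ * a * b) ^ k := by
        simpa only [inv_inv] using (conj_pow (a := b⁻¹)).symm
    _ = (a * b * a⁻¹) ^ k := by rw [inv_mul_mul_eq_mul_mul_inv_of_braid h]
    _ = a * b ^ k * a⁻¹ := conj_pow

theorem cusp_product_eq_of_braid (h : a * b * a = b * a * b) :
    (b⁻¹ * a ^ 3 * b) * a ^ 3 * (b * a ^ 3 * b⁻¹) = a * b ^ 3 * a * b ^ 3 * a := by
  rw [inv_mul_pow_mul_eq_mul_pow_mul_inv_of_braid h,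
    ← inv_mul_pow_mul_eq_mul_pow_mul_inv_of_braid h.symm]
  group

end Braid

theorem σ_eq_of {n k : ℕ} (h1 : 1 ≤ k) (h2 : k ≤ n - 1) :
    σ n k = (PresentedGroup.of (⟨k - 1, by omega⟩ : Fin (n - 1)) : BraidGroup n) :=
  dif_pos ⟨h1, h2⟩

theorem σ_braid_rel (n i : ℕ) (h1 : 1 ≤ i) (h2 : i ≤ n - 2) :
    σ n i * σ n (i + 1) * σ n i = σ n (i + 1) * σ n i * σ n (i + 1) := by
  rw [σ_eq_of h1 (by omega), σ_eq_of (by omega) (by omega)]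
  exact PresentedGroup.mk_eq_mk_of_mul_inv_mem (Or.inl ⟨_, _, by dsimp only; omega, rfl⟩)

/-- In `B_n`, for `1 ≤ i ≤ n - 2`, the product of the three cusp braids from
regenerating a tangency on the conic side satisfies
`(σ_{i+1}⁻¹ σ_i³ σ_{i+1}) σ_i³ (σ_{i+1} σ_i³ σ_{i+1}⁻¹) = σ_i σ_{i+1}³ σ_i σ_{i+1}³ σ_i`. -/
theorem three_cusps_conic_side (n i : ℕ) (h1 : 1 ≤ i) (h2 : i ≤ n - 2) :
    ((σ n (i + 1))⁻¹ * σ n i ^ 3 * σ n (i + 1)) * σ n i ^ 3 *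
        (σ n (i + 1) * σ n i ^ 3 * (σ n (i + 1))⁻¹) =
      σ n i * σ n (i + 1) ^ 3 * σ n i * σ n (i + 1) ^ 3 * σ n i :=
  cusp_product_eq_of_braid (σ_braid_rel n i h1 h2)
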